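/- arXiv:1408.6204 — 2 statements merged into one kernel-verified Lean document; each statement's English description precedes it below -/
import Mathlib

section
/- There is no 4-dimensional unit vector v with entries in D[ω] such that, writing k for the least δ-exponent of v and u = δᵏv ∈ Z[ω]⁴, the four entries of u are congruent to 0, 1, δ, δ+1 (mod δ²) in some order. -/
noncomputable section
open Complex

def ω : ℂ := Complex.exp (Real.pi * Complex.I / 4)

def δ : ℂ := 1 + ω

def inZω (x : ℂ) : Prop := ∃ a b c d : ℤ, x = a * ω^3 + b * ω^2 + c * ω + d

def inD (x : ℂ) : Prop := ∃ a : ℤ, ∃ n : ℕ, x = a / 2^n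

def inDω (x : ℂ) : Prop :=
  ∃ a b c d : ℂ, inD a ∧ inD b ∧ inD c ∧ inD d ∧ x = a * ω^3 + b * ω^2 + c * ω + d

def dvdZ (a b : ℂ) : Prop := ∃ t : ℂ, inZω t ∧ b = a * t

def isLde (n : ℕ) (k : ℕ) (v : Fin n → ℂ) : Prop :=
  (∀ i, inZω (δ^k * v i)) ∧ ∀ j : ℕ, j < k → ¬ (∀ i, inZω (δ^j * v i))

/-!
Put `u = δᵏ v ∈ ℤ[ω]⁴`. Then `∑ |uᵢ|² = (δ̄ δ)ᵏ`, where `δ̄ = -ω³ δ` is an associate of `δ`.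
Conjugation acts trivially on `ℤ[ω]/δ`, so `|r + δ² t|² ≡ |r|² (mod δ³)`, and the prescribed
residues force `(δ̄ δ)ᵏ ≡ 0 + 1 + |δ|² + |δ + 1|² = 8 + 3√2 (mod δ³)`, with `√2 = ω - ω³`.
Since `δ⁴` is `2` times a unit, `δ³ ∣ y` forces all coordinates of `δ y` in the basis
`1, ω, ω², ω³` to be even; this shows that neither `7 + 3√2` (the case `k = 0`) nor `8 + 3√2`
(the case `k ≥ 2`, where `δ³ ∣ (δ̄ δ)ᵏ`) is divisible by `δ³`. The case `k = 1` is excluded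
by hypothesis.
-/

open ComplexConjugate

lemma ω_pow_four : ω ^ 4 = -1 := by
  rw [ω, ← Complex.exp_nat_mul, ← Complex.exp_pi_mul_I]
  congr 1
  push_cast
  ring

lemma ω_eq : ω = (√2 / 2 : ℝ) + (√2 / 2 : ℝ) * I := by
  rw [ω, show (Real.pi * I / 4 : ℂ) = (Real.pi / 4 : ℝ) * I by push_cast; ring, Complex.exp_mul_I,
    ← Complex.ofReal_cos, ← Complex.ofReal_sin, Real.cos_pi_div_four, Real.sin_pi_div_four]

lemma ω_sq : ω ^ 2 = I := by
  have h : ((√2 : ℝ) : ℂ) ^ 2 = 2 := by norm_cast; simp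
  rw [ω_eq]
  push_cast
  linear_combination I / 2 * h + (√2 : ℂ) ^ 2 / 4 * I_sq

lemma conj_ω : conj ω = -ω ^ 3 := by
  rw [show ω ^ 3 = ω ^ 2 * ω by ring, ω_sq, ω_eq]
  simp only [map_add, map_mul, Complex.conj_ofReal, Complex.conj_I]
  linear_combination ((√2 / 2 : ℝ) : ℂ) * I_sq

lemma int_coeffs_eq_zero {a b c d : ℤ} (h : a * ω ^ 3 + b * ω ^ 2 + c * ω + d = 0) :
    a = 0 ∧ b = 0 ∧ c = 0 ∧ d = 0 := by
  have h' : (⟨d + (c - a) * √2 / 2, b + (a + c) * √2 / 2⟩ : ℂ) = 0 := by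
    rw [Complex.mk_eq_add_mul_I, ← h, show ω ^ 3 = ω ^ 2 * ω by ring, ω_sq, ω_eq]
    push_cast
    linear_combination -a * (√2 : ℂ) / 2 * I_sq
  have hre : d + (c - a) * √2 / 2 = 0 := congrArg Complex.re h'
  have him : b + (a + c) * √2 / 2 = 0 := congrArg Complex.im h'
  have eq_zero_of_mul_sqrt_two : ∀ m n : ℤ, (m : ℝ) * √2 = n → m = 0 ∧ n = 0 := by
    intro m n hmn
    obtain rfl : m = 0 := by
      by_contra hm
      exact (irrational_sqrt_two.intCast_mul hm).ne_int n hmn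
    exact ⟨rfl, by exact_mod_cast (by simpa using hmn.symm : (n : ℝ) = 0)⟩
  obtain ⟨h1, h2⟩ := eq_zero_of_mul_sqrt_two (c - a) (-2 * d) (by push_cast; linarith)
  obtain ⟨h3, h4⟩ := eq_zero_of_mul_sqrt_two (a + c) (-2 * b) (by push_cast; linarith)
  omega

def Zω : Subring ℂ where
  carrier := {x | inZω x}
  mul_mem' := by
    rintro _ _ ⟨a, b, c, d, rfl⟩ ⟨a', b', c', d', rfl⟩
    refine ⟨d * a' + c * b' + b * c' + a * d', d * b' + c * c' + b * d' - a * a',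
      d * c' + c * d' - b * a' - a * b', d * d' - c * a' - b * b' - a * c', ?_⟩
    push_cast
    linear_combination
      ((c : ℂ) * a' + b * b' + a * c' + ω * b * a' + ω * a * b' + ω ^ 2 * a * a') * ω_pow_four
  one_mem' := ⟨0, 0, 0, 1, by simp⟩
  add_mem' := by
    rintro _ _ ⟨a, b, c, d, rfl⟩ ⟨a', b', c', d', rfl⟩
    exact ⟨a + a', b + b', c + c', d + d', by push_cast; ring⟩
  zero_mem' := ⟨0, 0, 0, 0, by simp⟩
  neg_mem' := by
    rintro _ ⟨a, b, c, d, rfl⟩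
    exact ⟨-a, -b, -c, -d, by push_cast; ring⟩

lemma ω_mem_Zω : ω ∈ Zω := ⟨0, 0, 1, 0, by simp⟩

lemma δ_mem_Zω : δ ∈ Zω := add_mem (one_mem _) ω_mem_Zω

lemma conj_mem_Zω {x : ℂ} (hx : x ∈ Zω) : conj x ∈ Zω := by
  obtain ⟨a, b, c, d, rfl⟩ := hx
  simp only [map_add, map_mul, map_pow, map_intCast, conj_ω]
  have := ω_mem_Zω
  aesop

lemma conj_δ : conj δ = -ω ^ 3 * δ := by
  rw [δ, map_add, map_one, conj_ω]
  linear_combination ω_pow_four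

lemma dvdZ_of_eq_mul {a b t : ℂ} (ht : t ∈ Zω) (h : b = a * t) : dvdZ a b := ⟨t, ht, h⟩

lemma dvdZ.add {a b c : ℂ} (hb : dvdZ a b) (hc : dvdZ a c) : dvdZ a (b + c) := by
  obtain ⟨s, hs : s ∈ Zω, rfl⟩ := hb
  obtain ⟨t, ht : t ∈ Zω, rfl⟩ := hc
  exact dvdZ_of_eq_mul (add_mem hs ht) (by ring)

lemma dvdZ.sub {a b c : ℂ} (hb : dvdZ a b) (hc : dvdZ a c) : dvdZ a (b - c) := by
  obtain ⟨s, hs : s ∈ Zω, rfl⟩ := hb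
  obtain ⟨t, ht : t ∈ Zω, rfl⟩ := hc
  exact dvdZ_of_eq_mul (sub_mem hs ht) (by ring)

lemma dvdZ_δ_sub_conj {y : ℂ} (hy : y ∈ Zω) : dvdZ δ (y - conj y) := by
  obtain ⟨a, b, c, d, rfl⟩ := hy
  refine ⟨(a + c - b) * ω ^ 3 + b * ω ^ 2 + b * ω + (a + c - b),
    ⟨a + c - b, b, b, a + c - b, by push_cast; ring⟩, ?_⟩
  simp only [δ, map_add, map_mul, map_pow, map_intCast, conj_ω]
  linear_combination (-a - a * ω + a * ω ^ 5 + b - b * ω ^ 2 - c : ℂ) * ω_pow_four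

lemma dvdZ_δ_cube_conj_mul_self_sub {r u : ℂ} (hr : r ∈ Zω) (hu : dvdZ (δ ^ 2) (u - r)) :
    dvdZ (δ ^ 3) (conj u * u - conj r * r) := by
  obtain ⟨t, ht : t ∈ Zω, hut⟩ := hu
  obtain ⟨s, hs : s ∈ Zω, hrt⟩ := dvdZ_δ_sub_conj (mul_mem (conj_mem_Zω hr) ht)
  have := ω_mem_Zω
  have := δ_mem_Zω
  have := conj_mem_Zω ht
  refine dvdZ_of_eq_mul (t := s + (1 - ω) * r * conj t + δ * ω ^ 6 * conj t * t) (by aesop) ?_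
  rw [show u = r + δ ^ 2 * t by linear_combination hut]
  simp only [map_add, map_mul, map_pow, conj_δ, conj_conj] at hrt ⊢
  simp only [δ] at hrt ⊢
  linear_combination (1 + ω) ^ 2 * hrt + (conj t * r * ω ^ 2 * (1 + 2 * ω + ω ^ 2)) * ω_pow_four

lemma dvdZ_two_of_dvdZ_δ_cube {y : ℂ} (hy : dvdZ (δ ^ 3) y) : dvdZ 2 (δ * y) := by
  obtain ⟨t, ht : t ∈ Zω, rfl⟩ := hy
  have := ω_mem_Zω
  refine dvdZ_of_eq_mul (t := (2 * ω + 3 * ω ^ 2 + 2 * ω ^ 3) * t) (by aesop) ?_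
  simp only [δ]
  linear_combination t * ω_pow_four

lemma not_dvdZ_two {a b c d : ℤ} (hb : Odd b) :
    ¬ dvdZ 2 (a * ω ^ 3 + b * ω ^ 2 + c * ω + d) := by
  rintro ⟨_, ⟨a', b', c', d', rfl⟩, h⟩
  have := int_coeffs_eq_zero (a := a - 2 * a') (b := b - 2 * b') (c := c - 2 * c')
    (d := d - 2 * d') (by push_cast; linear_combination h)
  obtain ⟨k, rfl⟩ := hb
  omega

lemma not_dvdZ_δ_cube {y : ℂ} {a b c d : ℤ} (hb : Odd b)
    (hy : δ * y = a * ω ^ 3 + b * ω ^ 2 + c * ω + d) : ¬ dvdZ (δ ^ 3) y := fun h =>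
  not_dvdZ_two hb (hy ▸ dvdZ_two_of_dvdZ_δ_cube h)

lemma dvdZ_δ_cube_conj_δ_mul_δ_pow_add_two (k : ℕ) : dvdZ (δ ^ 3) ((conj δ * δ) ^ (k + 2)) := by
  have := ω_mem_Zω
  have := δ_mem_Zω
  refine dvdZ_of_eq_mul (t := (-ω ^ 3) ^ (k + 2) * δ ^ (2 * k + 1)) (by aesop) ?_
  rw [conj_δ]
  ring

theorem no_unit_vector_with_residues_0_1_delta_deltaplusone
    (hfact : ∀ (w : Fin 4 → ℂ), (∀ i, inDω (w i)) →
      (∑ i, (starRingEnd ℂ) (w i) * w i) = 1 → ¬ isLde 4 1 w)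
    (v : Fin 4 → ℂ) (k : ℕ)
    (hD : ∀ i, inDω (v i))
    (hunit : (∑ i, (starRingEnd ℂ) (v i) * v i) = 1)
    (hlde : isLde 4 k v) :
    ¬ ∃ σ : Equiv.Perm (Fin 4),
        dvdZ (δ^2) (δ^k * v (σ 0) - 0) ∧
        dvdZ (δ^2) (δ^k * v (σ 1) - 1) ∧
        dvdZ (δ^2) (δ^k * v (σ 2) - δ) ∧
        dvdZ (δ^2) (δ^k * v (σ 3) - (δ + 1)) := by
  rintro ⟨σ, h0, h1, h2, h3⟩
  have hnorm : ∑ i, conj (δ ^ k * v (σ i)) * (δ ^ k * v (σ i)) = (conj δ * δ) ^ k := by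
    rw [Equiv.sum_comp σ (fun i => conj (δ ^ k * v i) * (δ ^ k * v i))]
    calc ∑ i, conj (δ ^ k * v i) * (δ ^ k * v i)
        = ∑ i, (conj δ * δ) ^ k * (conj (v i) * v i) :=
          Finset.sum_congr rfl fun i _ => by rw [map_mul, map_pow]; ring
      _ = (conj δ * δ) ^ k := by rw [← Finset.mul_sum, hunit, mul_one]
  have hres :
      conj 0 * 0 + conj 1 * 1 + conj δ * δ + conj (δ + 1) * (δ + 1) = 8 + 3 * (ω - ω ^ 3) := by
    simp only [map_zero, map_one, map_add, conj_δ]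
    simp only [δ]
    linear_combination (-5 - 2 * ω) * ω_pow_four
  have hcong : dvdZ (δ ^ 3) ((conj δ * δ) ^ k - (8 + 3 * (ω - ω ^ 3))) := by
    have one_mem_Zω : (1 : ℂ) ∈ Zω := one_mem _
    rw [← hnorm, ← hres, Fin.sum_univ_four]
    convert (((dvdZ_δ_cube_conj_mul_self_sub (zero_mem _) h0).add
      (dvdZ_δ_cube_conj_mul_self_sub one_mem_Zω h1)).add
      (dvdZ_δ_cube_conj_mul_self_sub δ_mem_Zω h2)).add
      (dvdZ_δ_cube_conj_mul_self_sub (add_mem δ_mem_Zω one_mem_Zω) h3) using 1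
    ring
  rcases k with _ | _ | k
  · refine not_dvdZ_δ_cube (a := 3) (b := -3) (c := -10) (d := -10) (by decide) ?_
      (by rwa [pow_zero] at hcong)
    simp only [δ]
    push_cast
    linear_combination 3 * ω_pow_four
  · exact hfact v hD hunit hlde
  · refine not_dvdZ_δ_cube (a := -3) (b := 3) (c := 11) (d := 11) (by decide) ?_
      (by simpa only [sub_sub_cancel] using (dvdZ_δ_cube_conj_δ_mul_δ_pow_add_two k).sub hcong)
    simp only [δ]
    push_cast
    linear_combination -3 * ω_pow_four
end
end

section
/- Let v be an n-dimensional unit vector with entries in D[ω], with least δ-exponent k > 0, and let u = δᵏv. Then the number of indices i such that uᵢ ≡ 1 (mod δ) is even (and nonzero). -/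
noncomputable section
open Complex

/-! ### Basic facts about ω -/

lemma sqrt2_sq : ((Real.sqrt 2 : ℝ) : ℂ)^2 = 2 := by
  norm_cast
  rw [Real.sq_sqrt] <;> norm_num

lemma omega_eq : ω = (Real.sqrt 2 : ℝ)/2 + (Real.sqrt 2 : ℝ)/2 * I := by
  have h : (Real.pi : ℂ) * I / 4 = (Real.pi/4 : ℝ) * I := by push_cast; ring
  rw [ω, h, Complex.exp_mul_I, ← Complex.ofReal_cos, ← Complex.ofReal_sin,
    Real.cos_pi_div_four, Real.sin_pi_div_four]
  push_cast
  ring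

lemma omega_sq : ω^2 = I := by
  rw [omega_eq]
  linear_combination ((1+I)^2/4) * sqrt2_sq + (1/2) * Complex.I_sq

lemma omega_pow_four : ω^4 = -1 := by
  rw [show (4:ℕ) = 2*2 from rfl, pow_mul, omega_sq, Complex.I_sq]

lemma omega_cube : ω^3 = -(Real.sqrt 2 : ℝ)/2 + (Real.sqrt 2 : ℝ)/2 * I := by
  have h : ω^3 = I * ω := by rw [pow_succ, omega_sq]
  rw [h, omega_eq]
  linear_combination ((Real.sqrt 2 : ℝ) : ℂ)/2 * Complex.I_sq

lemma conj_omega : (starRingEnd ℂ) ω = -ω^3 := by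
  rw [omega_cube]
  nth_rewrite 1 [omega_eq]
  simp only [map_add, map_mul, map_div₀, Complex.conj_ofReal, Complex.conj_I, map_ofNat]
  ring

lemma delta_ne_zero : δ ≠ 0 := by
  rw [δ, omega_eq]
  intro h
  have := congrArg Complex.re h
  simp [Complex.add_re, Complex.div_re] at this
  nlinarith [Real.sqrt_nonneg 2, this]

/-! ### Linear independence -/

lemma int_mul_sqrt2 (p q : ℤ) (h : (p:ℝ) * Real.sqrt 2 + q = 0) : p = 0 ∧ q = 0 := by
  rcases eq_or_ne p 0 with hp | hp
  · subst hp
    simp at h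
    exact ⟨rfl, by exact_mod_cast h⟩
  · exfalso
    apply irrational_sqrt_two
    refine ⟨(-q : ℚ)/p, ?_⟩
    have hp' : (p:ℝ) ≠ 0 := by exact_mod_cast hp
    push_cast
    field_simp
    linarith

lemma indep (a b c d : ℤ) (h : (a:ℂ) * ω^3 + b * ω^2 + c * ω + d = 0) :
    a = 0 ∧ b = 0 ∧ c = 0 ∧ d = 0 := by
  rw [omega_cube, omega_sq, omega_eq] at h
  have hre : ((c - a : ℤ):ℝ) * Real.sqrt 2 + (2*d : ℤ) = 0 := by
    have := congrArg Complex.re h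
    simp [Complex.add_re, Complex.mul_re, Complex.div_re] at this
    push_cast
    nlinarith [this]
  have him : ((c + a : ℤ):ℝ) * Real.sqrt 2 + (2*b : ℤ) = 0 := by
    have := congrArg Complex.im h
    simp [Complex.add_im, Complex.mul_im, Complex.div_im] at this
    push_cast
    nlinarith [this]
  obtain ⟨h1, h2⟩ := int_mul_sqrt2 _ _ hre
  obtain ⟨h3, h4⟩ := int_mul_sqrt2 _ _ him
  refine ⟨by omega, by omega, by omega, by omega⟩

/-! ### Ring closure of Z[ω] and ideal properties of (δ) -/

lemma inZω_add {x y : ℂ} (hx : inZω x) (hy : inZω y) : inZω (x + y) := by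
  obtain ⟨a,b,c,d,rfl⟩ := hx; obtain ⟨a',b',c',d',rfl⟩ := hy
  exact ⟨a+a', b+b', c+c', d+d', by push_cast; ring⟩

lemma inZω_sub {x y : ℂ} (hx : inZω x) (hy : inZω y) : inZω (x - y) := by
  obtain ⟨a,b,c,d,rfl⟩ := hx; obtain ⟨a',b',c',d',rfl⟩ := hy
  exact ⟨a-a', b-b', c-c', d-d', by push_cast; ring⟩

lemma inZω_int (m : ℤ) : inZω (m:ℂ) := ⟨0,0,0,m, by push_cast; ring⟩

lemma inZω_zero : inZω 0 := by simpa using inZω_int 0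

lemma inZω_mul {x y : ℂ} (hx : inZω x) (hy : inZω y) : inZω (x * y) := by
  obtain ⟨a,b,c,d,rfl⟩ := hx; obtain ⟨a',b',c',d',rfl⟩ := hy
  refine ⟨d*a'+a*d'+c*b'+b*c', d*b'+b*d'+c*c'-a*a', d*c'+c*d'-b*a'-a*b',
    d*d'-c*a'-b*b'-a*c', ?_⟩
  push_cast
  linear_combination (a*a'*ω^2 + (a*b'+b*a')*ω + (a*c'+b*b'+c*a')) * omega_pow_four

lemma inZω_pow {x : ℂ} (hx : inZω x) (m : ℕ) : inZω (x ^ m) := by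
  induction m with
  | zero => simpa using inZω_int 1
  | succ m ih => rw [pow_succ]; exact inZω_mul ih hx

lemma inZω_delta : inZω δ := ⟨0,0,1,1, by rw [δ]; push_cast; ring⟩

lemma inZω_conj_delta : inZω ((starRingEnd ℂ) δ) := by
  refine ⟨-1,0,0,1, ?_⟩
  rw [δ, map_add, map_one, conj_omega]; push_cast; ring

lemma dvdZ_zero : dvdZ δ 0 := ⟨0, inZω_zero, by ring⟩

lemma dvdZ_add {x y : ℂ} (hx : dvdZ δ x) (hy : dvdZ δ y) : dvdZ δ (x + y) := by
  obtain ⟨t, ht, rfl⟩ := hx; obtain ⟨s, hs, rfl⟩ := hy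
  exact ⟨t + s, inZω_add ht hs, by ring⟩

lemma dvdZ_sub {x y : ℂ} (hx : dvdZ δ x) (hy : dvdZ δ y) : dvdZ δ (x - y) := by
  obtain ⟨t, ht, rfl⟩ := hx; obtain ⟨s, hs, rfl⟩ := hy
  exact ⟨t - s, inZω_sub ht hs, by ring⟩

lemma dvdZ_mul_right {x y : ℂ} (hx : dvdZ δ x) (hy : inZω y) : dvdZ δ (x * y) := by
  obtain ⟨t, ht, rfl⟩ := hx
  exact ⟨t * y, inZω_mul ht hy, by ring⟩

lemma dvdZ_two_mul (m : ℤ) : dvdZ δ ((2 * m : ℤ) : ℂ) := by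
  refine ⟨(m:ℂ) * (1 - ω + ω^2 - ω^3), inZω_mul (inZω_int m) ⟨-1,1,-1,1, by push_cast; ring⟩, ?_⟩
  rw [δ]
  push_cast
  linear_combination (m:ℂ) * omega_pow_four

lemma dvdZ_even {m : ℤ} (hm : Even m) : dvdZ δ ((m:ℤ):ℂ) := by
  obtain ⟨j, rfl⟩ := hm
  have := dvdZ_two_mul j
  convert this using 2
  push_cast; ring

lemma dvdZ_sum {ι : Type*} (s : Finset ι) (f : ι → ℂ) (h : ∀ i ∈ s, dvdZ δ (f i)) :
    dvdZ δ (∑ i ∈ s, f i) :=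
  Finset.sum_induction f (dvdZ δ) (fun _ _ ha hb => dvdZ_add ha hb) dvdZ_zero h

/-! ### Residues mod δ -/

lemma res_dvd (a b c d : ℤ) :
    dvdZ δ ((a:ℂ) * ω^3 + b * ω^2 + c * ω + d - ((d + b - a - c : ℤ):ℂ)) := by
  refine ⟨(a:ℂ)*ω^2 + ((b:ℤ) - a : ℤ) * ω + ((a:ℤ) - b + c : ℤ),
    ⟨0, a, b-a, a-b+c, by push_cast; ring⟩, ?_⟩
  rw [δ]; push_cast; ring

lemma conj_rep (a b c d : ℤ) :
    (starRingEnd ℂ) ((a:ℂ) * ω^3 + b * ω^2 + c * ω + d)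
      = ((-c : ℤ):ℂ) * ω^3 + ((-b : ℤ):ℂ) * ω^2 + ((-a : ℤ):ℂ) * ω + ((d:ℤ):ℂ) := by
  simp only [map_add, map_mul, map_pow, map_intCast, conj_omega]
  push_cast
  linear_combination ((-(a:ℂ))*ω*(ω^4-1) + (b:ℂ)*ω^2) * omega_pow_four

lemma not_dvdZ_one : ¬ dvdZ δ 1 := by
  rintro ⟨t, ⟨a,b,c,d,rfl⟩, h1⟩
  rw [δ] at h1
  have h0 : ((a+b : ℤ):ℂ) * ω^3 + ((b+c:ℤ):ℂ) * ω^2 + ((c+d:ℤ):ℂ) * ω + ((d-a-1:ℤ):ℂ) = 0 := by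
    push_cast
    linear_combination -h1 - (a:ℂ) * omega_pow_four
  obtain ⟨e1, e2, e3, e4⟩ := indep _ _ _ _ h0
  omega

lemma parity_even (a b c d : ℤ) :
    Even ((d - b + c + a) * (d + b - a - c) - (a+b+c+d) % 2) := by
  rw [Int.even_iff, Int.sub_emod, Int.mul_emod]
  have h1 : (d - b + c + a) % 2 = (a+b+c+d) % 2 := by omega
  have h2 : (d + b - a - c) % 2 = (a+b+c+d) % 2 := by omega
  rw [h1, h2]
  rcases Int.emod_two_eq (a+b+c+d) with h | h <;> rw [h] <;> norm_num

/-! ### Main theorem -/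

theorem even_number_of_odd_residues (n : ℕ) (v : Fin n → ℂ) (k : ℕ)
    (hD : ∀ i, inDω (v i))
    (hunit : (∑ i, (starRingEnd ℂ) (v i) * v i) = 1)
    (hlde : isLde n k v) (hk : 0 < k) :
    Even (Set.ncard {i : Fin n | dvdZ δ (δ^k * v i - 1)}) ∧
    {i : Fin n | dvdZ δ (δ^k * v i - 1)}.Nonempty := by
  classical
  obtain ⟨hu, hmin⟩ := hlde
  choose a b c d hrep using hu
  set ε : Fin n → ℤ := fun i => (a i + b i + c i + d i) % 2 with hε
  have hε01 : ∀ i, ε i = 0 ∨ ε i = 1 := fun i => Int.emod_two_eq _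
  -- u_i ≡ ε_i  (mod δ)
  have hxe : ∀ i, dvdZ δ (δ^k * v i - (ε i : ℂ)) := by
    intro i
    have h1 := res_dvd (a i) (b i) (c i) (d i)
    have h2 : dvdZ δ (((d i + b i - a i - c i) - ε i : ℤ) : ℂ) :=
      dvdZ_even (by rw [Int.even_iff]; simp only [hε]; omega)
    have heq : δ^k * v i - (ε i : ℂ)
        = ((a i:ℂ) * ω^3 + (b i) * ω^2 + (c i) * ω + (d i)
            - ((d i + b i - a i - c i : ℤ):ℂ))
          + (((d i + b i - a i - c i) - ε i : ℤ) : ℂ) := by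
      rw [hrep i]; push_cast; ring
    rw [heq]
    exact dvdZ_add h1 h2
  -- conj u_i * u_i ≡ ε_i  (mod δ)
  have hcx : ∀ i, dvdZ δ ((starRingEnd ℂ) (δ^k * v i) * (δ^k * v i) - (ε i : ℂ)) := by
    intro i
    have hconj : (starRingEnd ℂ) (δ^k * v i)
        = ((-(c i) : ℤ):ℂ) * ω^3 + ((-(b i) : ℤ):ℂ) * ω^2 + ((-(a i):ℤ):ℂ) * ω + ((d i:ℤ):ℂ) := by
      rw [hrep i, conj_rep]
    have hc2 : dvdZ δ ((starRingEnd ℂ) (δ^k * v i)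
        - ((d i - b i + c i + a i : ℤ):ℂ)) := by
      rw [hconj]
      have := res_dvd (-(c i)) (-(b i)) (-(a i)) (d i)
      convert this using 3
      push_cast; ring
    have hterm1 : dvdZ δ (((starRingEnd ℂ) (δ^k * v i)
        - ((d i - b i + c i + a i : ℤ):ℂ)) * (δ^k * v i)) :=
      dvdZ_mul_right hc2 ⟨a i, b i, c i, d i, hrep i⟩
    have hterm2 : dvdZ δ ((δ^k * v i - ((d i + b i - a i - c i : ℤ):ℂ))
        * ((d i - b i + c i + a i : ℤ):ℂ)) := by
      apply dvdZ_mul_right _ (inZω_int _)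
      have h1 := res_dvd (a i) (b i) (c i) (d i)
      have heq : δ^k * v i - ((d i + b i - a i - c i : ℤ):ℂ)
          = ((a i:ℂ) * ω^3 + (b i) * ω^2 + (c i) * ω + (d i)
            - ((d i + b i - a i - c i : ℤ):ℂ)) := by rw [hrep i]
      rw [heq]; exact h1
    have hterm3 : dvdZ δ ((((d i - b i + c i + a i) * (d i + b i - a i - c i)
        - (a i + b i + c i + d i) % 2 : ℤ)):ℂ) :=
      dvdZ_even (parity_even (a i) (b i) (c i) (d i))
    have heq : (starRingEnd ℂ) (δ^k * v i) * (δ^k * v i) - (ε i : ℂ)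
        = ((starRingEnd ℂ) (δ^k * v i) - ((d i - b i + c i + a i : ℤ):ℂ)) * (δ^k * v i)
          + (δ^k * v i - ((d i + b i - a i - c i : ℤ):ℂ)) * ((d i - b i + c i + a i : ℤ):ℂ)
          + (((d i - b i + c i + a i) * (d i + b i - a i - c i)
              - (a i + b i + c i + d i) % 2 : ℤ):ℂ) := by
      simp only [hε]; push_cast; ring
    rw [heq]
    exact dvdZ_add (dvdZ_add hterm1 hterm2) hterm3
  -- the total sum is δ̄^k δ^k, divisible by δ
  have hS : (∑ i, (starRingEnd ℂ) (δ^k * v i) * (δ^k * v i))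
      = ((starRingEnd ℂ) δ)^k * δ^k := by
    calc (∑ i, (starRingEnd ℂ) (δ^k * v i) * (δ^k * v i))
        = ((starRingEnd ℂ) δ)^k * δ^k * ∑ i, (starRingEnd ℂ) (v i) * v i := by
          rw [Finset.mul_sum]
          exact Finset.sum_congr rfl fun i _ => by rw [map_mul, map_pow]; ring
      _ = _ := by rw [hunit, mul_one]
  have hdvdS : dvdZ δ (((starRingEnd ℂ) δ)^k * δ^k) := by
    obtain ⟨k', rfl⟩ : ∃ k', k = k' + 1 := ⟨k-1, by omega⟩
    exact ⟨((starRingEnd ℂ) δ)^(k'+1) * δ^k',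
      inZω_mul (inZω_pow inZω_conj_delta _) (inZω_pow inZω_delta _), by ring⟩
  set M : ℤ := ∑ i, ε i with hMdef
  have hM : dvdZ δ ((M:ℤ):ℂ) := by
    have h1 : dvdZ δ (∑ i, ((starRingEnd ℂ) (δ^k * v i) * (δ^k * v i) - (ε i : ℂ))) :=
      dvdZ_sum _ _ (fun i _ => hcx i)
    have heq : ((M:ℤ):ℂ) = (((starRingEnd ℂ) δ)^k * δ^k)
        - (∑ i, ((starRingEnd ℂ) (δ^k * v i) * (δ^k * v i) - (ε i : ℂ))) := by
      rw [Finset.sum_sub_distrib, hS, hMdef]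
      push_cast
      ring
    rw [heq]
    exact dvdZ_sub hdvdS h1
  have hMeven : Even M := by
    by_contra hodd
    have hev : Even (M - 1) := by
      rw [Int.even_iff] at *
      omega
    have h1 : dvdZ δ (1:ℂ) := by
      have heq : (1:ℂ) = ((M:ℤ):ℂ) - (((M-1 : ℤ)):ℂ) := by push_cast; ring
      rw [heq]
      exact dvdZ_sub hM (dvdZ_even hev)
    exact not_dvdZ_one h1
  -- membership characterization
  have hmem : ∀ i, dvdZ δ (δ^k * v i - 1) ↔ ε i = 1 := by
    intro i
    constructor
    · intro hd
      by_contra hne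
      have he0 : ε i = 0 := by rcases hε01 i with h | h; exact h; exact absurd h hne
      have h1 : dvdZ δ (δ^k * v i) := by
        have := hxe i
        rwa [he0, Int.cast_zero, sub_zero] at this
      have h2 : dvdZ δ (1:ℂ) := by
        have := dvdZ_sub h1 hd
        simpa using this
      exact not_dvdZ_one h2
    · intro h1
      have := hxe i
      rwa [h1, Int.cast_one] at this
  set T : Finset (Fin n) := Finset.univ.filter (fun i => ε i = 1) with hT
  have hsetT : {i : Fin n | dvdZ δ (δ^k * v i - 1)} = ↑T := by
    ext i
    simp [hT, hmem i]
  have hMT : M = (T.card : ℤ) := by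
    rw [hT, Finset.card_filter, hMdef]
    push_cast
    refine Finset.sum_congr rfl fun i _ => ?_
    rcases hε01 i with h | h <;> rw [h] <;> simp
  constructor
  · rw [hsetT, Set.ncard_coe_finset]
    have : Even ((T.card : ℤ)) := hMT ▸ hMeven
    exact_mod_cast this
  · have hex : ∃ i, ε i = 1 := by
      by_contra hall
      push_neg at hall
      have hall0 : ∀ i, ε i = 0 := by
        intro i
        rcases hε01 i with h | h
        · exact h
        · exact absurd h (hall i)
      obtain ⟨k', rfl⟩ : ∃ k', k = k' + 1 := ⟨k-1, by omega⟩
      apply hmin k' (by omega)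
      intro i
      have h0 : dvdZ δ (δ^(k'+1) * v i) := by
        have := hxe i
        rwa [hall0 i, Int.cast_zero, sub_zero] at this
      obtain ⟨t, ht, heq⟩ := h0
      have hcancel : δ^k' * v i = t := by
        apply mul_left_cancel₀ delta_ne_zero
        rw [← heq]; ring
      rw [hcancel]
      exact ht
    obtain ⟨i, hi⟩ := hex
    exact ⟨i, (hmem i).2 hi⟩
end
end
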